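/- arXiv:1209.2547 — 4 statements merged into one kernel-verified Lean document; each statement's English description precedes it below -/
import Mathlib

section
/- Let S : ℂ → ℂ be differentiable (holomorphic) on the strip S(0,π) = {ζ ∈ ℂ : 0 < Im ζ < π} and suppose S(iπ − ζ) = S(ζ) for all ζ ∈ S(0,π) (crossing symmetry). Then there exists a function φ : ℂ → ℂ that is differentiable on the upper half plane ℍ = {z : Im z > 0} and satisfies φ(sinh ζ) = S(ζ) for all ζ ∈ S(0,π). -/
/-!
Since `2 (sinh a - sinh b) e^(a+b) = (e^a - e^b)(e^(a+b) + 1)`, two points of the strip have the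
same image under `sinh` iff they are equal or exchanged by `ζ ↦ iπ - ζ`, and `sinh` maps the strip
onto `ℍ`. Hence `φ(z) := S(ζ)` for any preimage `ζ` of `z` in the strip is well defined. Away from
the critical value `i = sinh (iπ/2)`, `φ` is `S` composed with a local inverse of `sinh`, so it is
holomorphic; at `i` it is continuous because `sinh` is an open map, and Riemann's removable
singularity theorem gives holomorphy there too.
-/

open Complex Filter Function Set
open scoped Real Topology

theorem HasStrictDerivAt.differentiableAt_of_comp_eventuallyEq {𝕜 E : Type*}
    [NontriviallyNormedField 𝕜] [CompleteSpace 𝕜] [NormedAddCommGroup E] [NormedSpace 𝕜 E]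
    {p : 𝕜 → 𝕜} {F S : 𝕜 → E} {p' a : 𝕜} (hp : HasStrictDerivAt p p' a) (hp' : p' ≠ 0)
    (hS : DifferentiableAt 𝕜 S a) (h : F ∘ p =ᶠ[𝓝 a] S) : DifferentiableAt 𝕜 F (p a) := by
  have hq := hp.to_localInverse hp'
  have hleft := hp.eventually_left_inverse hp'
  have hright := hp.eventually_right_inverse hp'
  generalize hp.localInverse p p' a hp' = q at hq hleft hright
  have hqa : q (p a) = a := hleft.self_of_nhds
  have hq_tendsto : Tendsto q (𝓝 (p a)) (𝓝 a) := by
    simpa only [hqa] using hq.hasDerivAt.continuousAt.tendsto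
  have hFq : F =ᶠ[𝓝 (p a)] S ∘ q := by
    filter_upwards [hright, hq_tendsto.eventually h] with y hpq hy
    rw [Function.comp_apply, ← hy, Function.comp_apply, hpq]
  exact ((hqa ▸ hS).comp _ hq.hasDerivAt.differentiableAt).congr_of_eventuallyEq hFq

theorem continuousAt_of_comp_eventuallyEq {X Y Z : Type*} [TopologicalSpace X]
    [TopologicalSpace Y] [TopologicalSpace Z] {p : X → Y} {F : Y → Z} {S : X → Z} {a : X}
    (hp : 𝓝 (p a) ≤ map p (𝓝 a)) (hS : ContinuousAt S a) (h : F ∘ p =ᶠ[𝓝 a] S) :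
    ContinuousAt F (p a) := by
  have hFp : ContinuousAt (F ∘ p) a := hS.congr_of_eventuallyEq h
  exact (tendsto_map'_iff.mpr hFp.tendsto).mono_left hp

namespace Complex

theorem eq_of_exp_eq_of_abs_im_sub_lt {x y : ℂ} (h : exp x = exp y)
    (hxy : |x.im - y.im| < 2 * π) : x = y := by
  obtain ⟨n, rfl⟩ := exp_eq_exp_iff_exists_int.mp h
  have hn : |(n : ℝ)| < 1 := by
    have : |(n : ℝ)| * (2 * π) < 1 * (2 * π) := by
      simpa [abs_mul, abs_of_pos Real.pi_pos] using hxy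
    exact lt_of_mul_lt_mul_right this (by positivity)
  have : n = 0 := by
    rw [← Int.cast_abs] at hn
    exact Int.abs_lt_one_iff.mp (by exact_mod_cast hn)
  simp [this]

theorem sinh_eq_sinh_iff {a b : ℂ} : sinh a = sinh b ↔ exp a = exp b ∨ exp (a + b) = -1 := by
  have key : (sinh a - sinh b) * (2 * exp (a + b)) = (exp a - exp b) * (exp (a + b) + 1) := by
    simp only [sinh, exp_add, exp_neg]
    field_simp
    ring
  rw [← sub_eq_zero, eq_neg_iff_add_eq_zero, ← sub_eq_zero (a := exp a), ← mul_eq_zero, ← key,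
    mul_eq_zero, or_iff_left (mul_ne_zero two_ne_zero (exp_ne_zero _))]

theorem cosh_ne_zero_of_sinh_ne_I {ζ : ℂ} (him : 0 < (sinh ζ).im) (hI : sinh ζ ≠ I) :
    cosh ζ ≠ 0 := by
  intro h
  have hsq : sinh ζ ^ 2 = I ^ 2 := by
    rw [I_sq]
    linear_combination -(cosh_sq_sub_sinh_sq ζ) + cosh ζ * h
  rcases sq_eq_sq_iff_eq_or_eq_neg.mp hsq with h' | h'
  · exact hI h'
  · rw [h', neg_im, I_im] at him
    linarith

theorem sinh_pi_div_two_mul_I : sinh (π / 2 * I) = I := by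
  simp [sinh_mul_I]

theorem isOpenMap_sinh : IsOpenMap sinh := by
  refine analyticOnNhd_sinh.is_constant_or_isOpenMap.resolve_left ?_
  rintro ⟨w, hw⟩
  have h := (hw 0).trans (hw (π / 2 * I)).symm
  rw [sinh_zero, sinh_pi_div_two_mul_I] at h
  exact I_ne_zero h.symm

end Complex

def strip : Set ℂ := {ζ : ℂ | 0 < ζ.im ∧ ζ.im < π}

theorem isOpen_strip : IsOpen strip :=
  (isOpen_Ioo (a := 0) (b := π)).preimage continuous_im

theorem pi_div_two_mul_I_mem_strip : (π / 2 * I : ℂ) ∈ strip := by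
  constructor <;> simp [Real.pi_pos]

theorem log_mem_strip {w : ℂ} (hw : 0 < w.im) : log w ∈ strip := by
  show 0 < (log w).im ∧ (log w).im < π
  rw [log_im]
  exact ⟨(arg_nonneg_iff.mpr hw.le).lt_of_ne fun h ↦ hw.ne' (arg_eq_zero_iff.mp h.symm).2,
    arg_lt_pi_iff.mpr (Or.inr hw.ne')⟩

theorem eq_or_eq_pi_mul_I_sub_of_sinh_eq {a b : ℂ} (ha : a ∈ strip) (hb : b ∈ strip)
    (h : sinh a = sinh b) : b = a ∨ b = π * I - a := by
  obtain ⟨ha₀, ha₁⟩ := ha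
  obtain ⟨hb₀, hb₁⟩ := hb
  rcases sinh_eq_sinh_iff.mp h with hexp | hexp
  · refine Or.inl (eq_of_exp_eq_of_abs_im_sub_lt hexp.symm ?_)
    rw [abs_lt]
    constructor <;> linarith
  · have hsum : a + b = π * I := by
      refine eq_of_exp_eq_of_abs_im_sub_lt (hexp.trans exp_pi_mul_I.symm) ?_
      simp only [add_im, mul_im, ofReal_re, ofReal_im, I_re, I_im]
      rw [abs_lt]
      constructor <;> linarith
    exact Or.inr (by linear_combination hsum)

theorem exists_mem_strip_sinh_eq {z : ℂ} (hz : 0 < z.im) : ∃ ζ ∈ strip, sinh ζ = z := by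
  obtain ⟨c, hc⟩ := IsAlgClosed.exists_pow_nat_eq (z ^ 2 + 1) two_pos
  -- `sinh (log w) = z` for a root `w` of `w ^ 2 = 2 z w + 1`; the roots `z ± c` have
  -- imaginary parts summing to `2 z.im`, so one of them lies in `ℍ`.
  obtain ⟨w, hw, hwz⟩ : ∃ w : ℂ, 0 < w.im ∧ w ^ 2 = 2 * z * w + 1 := by
    by_cases hpos : 0 < (z + c).im
    · exact ⟨z + c, hpos, by linear_combination hc⟩
    · refine ⟨z - c, ?_, by linear_combination hc⟩
      simp only [add_im, sub_im, not_lt] at hpos ⊢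
      linarith
  have hw₀ : w ≠ 0 := fun h ↦ by simp [h] at hw
  refine ⟨log w, log_mem_strip hw, ?_⟩
  rw [sinh, exp_neg, exp_log hw₀]
  field_simp
  linear_combination hwz

theorem comp_invFunOn_sinh_eq {S : ℂ → ℂ} (hcross : ∀ ζ ∈ strip, S (π * I - ζ) = S ζ)
    {ζ : ℂ} (hζ : ζ ∈ strip) : S (invFunOn sinh strip (sinh ζ)) = S ζ := by
  obtain ⟨hmem, hsinh⟩ := invFunOn_pos (f := sinh) ⟨ζ, hζ, rfl⟩
  rcases eq_or_eq_pi_mul_I_sub_of_sinh_eq hζ hmem hsinh.symm with h | h <;> rw [h]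
  exact hcross ζ hζ

/-- A crossing-symmetric holomorphic function on the strip S(0,π) factors
through sinh via a function holomorphic on the upper half plane. -/
theorem crossing_symmetric_factors_through_sinh (S : ℂ → ℂ)
    (hS : DifferentiableOn ℂ S {ζ : ℂ | 0 < ζ.im ∧ ζ.im < Real.pi})
    (hcross : ∀ ζ ∈ {ζ : ℂ | 0 < ζ.im ∧ ζ.im < Real.pi},
      S (Real.pi * Complex.I - ζ) = S ζ) :
    ∃ φ : ℂ → ℂ, DifferentiableOn ℂ φ {z : ℂ | 0 < z.im} ∧
      ∀ ζ ∈ {ζ : ℂ | 0 < ζ.im ∧ ζ.im < Real.pi},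
        φ (Complex.sinh ζ) = S ζ := by
  set φ := S ∘ invFunOn sinh strip
  have hφ : ∀ ζ ∈ strip, φ (sinh ζ) = S ζ := fun ζ hζ ↦ comp_invFunOn_sinh_eq hcross hζ
  have hφ_nhds : ∀ ζ ∈ strip, φ ∘ sinh =ᶠ[𝓝 ζ] S := fun ζ hζ ↦
    eventually_of_mem (isOpen_strip.mem_nhds hζ) hφ
  have hS_at : ∀ ζ ∈ strip, DifferentiableAt ℂ S ζ := fun ζ hζ ↦
    hS.differentiableAt (isOpen_strip.mem_nhds hζ)
  refine ⟨φ, ?_, hφ⟩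
  rw [← differentiableOn_compl_singleton_and_continuousAt_iff (c := I)
    ((isOpen_lt continuous_const continuous_im).mem_nhds (by simp))]
  constructor
  · rintro z ⟨hz, hzI : z ≠ I⟩
    obtain ⟨ζ, hζ, rfl⟩ := exists_mem_strip_sinh_eq hz
    exact ((hasStrictDerivAt_sinh ζ).differentiableAt_of_comp_eventuallyEq
      (cosh_ne_zero_of_sinh_ne_I hz hzI) (hS_at ζ hζ) (hφ_nhds ζ hζ)).differentiableWithinAt
  · rw [← sinh_pi_div_two_mul_I]
    exact continuousAt_of_comp_eventuallyEq (isOpenMap_sinh.nhds_le _)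
      (hS_at _ pi_div_two_mul_I_mem_strip).continuousAt (hφ_nhds _ pi_div_two_mul_I_mem_strip)
end

section
/- Let m > 0 and let N ⊆ ℝ be a Lebesgue-null set. Then the set {(p,q) ∈ ℝ² : (1/2)(ω_m(q)·p − ω_m(p)·q) ∈ N} is a Lebesgue-null subset of ℝ², where ω_m(p) := √(m² + p²). -/
open MeasureTheory Measure

/-!
For fixed `p`, the section `q ↦ (1/2)(ω_m(q) p − ω_m(p) q)` has derivative
`(1/2)(q p / ω_m(q) − ω_m(p))`, which is negative because `|q| / ω_m(q) ≤ 1` and `|p| < ω_m(p)`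
when `m ≠ 0`. A map of the line with nowhere-vanishing derivative pulls null sets back to null
sets (change of variables: `∫_{f⁻¹ N} |f'| = |N| = 0`), and Fubini–Tonelli upgrades this
property of every section to the map on the plane.
-/

theorem quasiMeasurePreserving_of_hasFDerivAt_det_ne_zero
    {E : Type*} [NormedAddCommGroup E] [NormedSpace ℝ E] [FiniteDimensional ℝ E]
    [MeasurableSpace E] [BorelSpace E] (μ : Measure E) [μ.IsAddHaarMeasure]
    {f : E → E} {f' : E → E →L[ℝ] E} (hf : ∀ x, HasFDerivAt f (f' x) x)
    (hinj : Function.Injective f) (hdet : ∀ x, (f' x).det ≠ 0) :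
    QuasiMeasurePreserving f μ μ := by
  have hf_cont : Continuous f := continuous_iff_continuousAt.2 fun x => (hf x).continuousAt
  refine ⟨hf_cont.measurable, AbsolutelyContinuous.mk fun N hN hμN => ?_⟩
  set s := f ⁻¹' N
  have hs : MeasurableSet s := hf_cont.measurable hN
  have hf_s : ∀ x ∈ s, HasFDerivWithinAt f (f' x) s x := fun x _ => (hf x).hasFDerivWithinAt
  have hzero : ∫⁻ x in s, ENNReal.ofReal |(f' x).det| ∂μ = 0 := by
    rw [lintegral_abs_det_fderiv_eq_addHaar_image μ hs hf_s hinj.injOn]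
    exact measure_mono_null (Set.image_preimage_subset f N) hμN
  rw [setLIntegral_eq_zero_iff' hs (aemeasurable_ofReal_abs_det_fderivWithin μ hs hf_s)] at hzero
  rw [map_apply hf_cont.measurable hN, measure_eq_zero_iff_ae_notMem]
  filter_upwards [hzero] with x hx hxs
  simpa [hdet x] using hx hxs

theorem quasiMeasurePreserving_of_hasDerivAt_ne_zero {f f' : ℝ → ℝ}
    (hf : ∀ x, HasDerivAt f (f' x) x) (hinj : Function.Injective f) (hf' : ∀ x, f' x ≠ 0) :
    QuasiMeasurePreserving f volume volume :=
  quasiMeasurePreserving_of_hasFDerivAt_det_ne_zero volume (fun x => (hf x).hasFDerivAt) hinj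
    (by simpa using hf')

theorem abs_lt_sqrt_sq_add_sq {m : ℝ} (hm : m ≠ 0) (p : ℝ) : |p| < √(m ^ 2 + p ^ 2) := by
  rw [← Real.sqrt_sq_eq_abs]
  exact Real.sqrt_lt_sqrt (sq_nonneg p) (by linarith [pow_pos (abs_pos.2 hm) 2, sq_abs m])

theorem hasDerivAt_sqrt_sq_add_sq {m : ℝ} (hm : m ≠ 0) (q : ℝ) :
    HasDerivAt (fun q : ℝ => √(m ^ 2 + q ^ 2)) (q / √(m ^ 2 + q ^ 2)) q := by
  have hpos : 0 < m ^ 2 + q ^ 2 := by positivity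
  convert ((hasDerivAt_pow 2 q).const_add (m ^ 2)).sqrt hpos.ne' using 1
  field_simp
  ring

theorem hasDerivAt_wedge_section {m : ℝ} (hm : m ≠ 0) (p q : ℝ) :
    HasDerivAt (fun q : ℝ => (1/2 : ℝ) * (√(m ^ 2 + q ^ 2) * p - √(m ^ 2 + p ^ 2) * q))
      ((1/2 : ℝ) * (q / √(m ^ 2 + q ^ 2) * p - √(m ^ 2 + p ^ 2))) q := by
  simpa using (((hasDerivAt_sqrt_sq_add_sq hm q).mul_const p).sub
    ((hasDerivAt_id q).const_mul (√(m ^ 2 + p ^ 2)))).const_mul (1/2 : ℝ)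

theorem wedge_section_deriv_neg {m : ℝ} (hm : m ≠ 0) (p q : ℝ) :
    (1/2 : ℝ) * (q / √(m ^ 2 + q ^ 2) * p - √(m ^ 2 + p ^ 2)) < 0 := by
  have hq : |q / √(m ^ 2 + q ^ 2)| ≤ 1 := by
    rw [abs_div, abs_of_nonneg (Real.sqrt_nonneg _)]
    exact div_le_one_of_le₀ (abs_lt_sqrt_sq_add_sq hm q).le (Real.sqrt_nonneg _)
  have hp := abs_lt_sqrt_sq_add_sq hm p
  calc (1/2 : ℝ) * (q / √(m ^ 2 + q ^ 2) * p - √(m ^ 2 + p ^ 2))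
      ≤ (1/2 : ℝ) * (|p| - √(m ^ 2 + p ^ 2)) := by
        gcongr
        calc q / √(m ^ 2 + q ^ 2) * p ≤ |q / √(m ^ 2 + q ^ 2) * p| := le_abs_self _
          _ = |q / √(m ^ 2 + q ^ 2)| * |p| := abs_mul _ _
          _ ≤ |p| := mul_le_of_le_one_left (abs_nonneg p) hq
    _ < 0 := by linarith

/-- For m > 0, the preimage of a Lebesgue-null set under the map
`(p,q) ↦ (1/2)(ω_m(q)p − ω_m(p)q)` is a Lebesgue-null subset of ℝ². -/
theorem null_preimage_wedge_map (m : ℝ) (hm : 0 < m)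
    (N : Set ℝ) (hN : volume N = 0) :
    volume {x : ℝ × ℝ |
      (1/2 : ℝ) * (Real.sqrt (m^2 + x.2^2) * x.1
        - Real.sqrt (m^2 + x.1^2) * x.2) ∈ N} = 0 := by
  have hsection : ∀ p : ℝ, QuasiMeasurePreserving
      (fun q : ℝ => (1/2 : ℝ) * (√(m ^ 2 + q ^ 2) * p - √(m ^ 2 + p ^ 2) * q)) := fun p =>
    have hderiv := hasDerivAt_wedge_section hm.ne' p
    quasiMeasurePreserving_of_hasDerivAt_ne_zero hderiv
      (strictAnti_of_hasDerivAt_neg hderiv (wedge_section_deriv_neg hm.ne' p)).injective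
      fun q => (wedge_section_deriv_neg hm.ne' p q).ne
  rw [Measure.volume_eq_prod]
  exact (QuasiMeasurePreserving.prod_of_right (by fun_prop) (ae_of_all _ hsection)).preimage_null
    hN
end

section
/- Let R : ℝ → ℂ be any function and define R₀⁺ : ℝ² → ℂ by R₀⁺(p,q) := R(−pq) if p > 0 and q < 0, and R₀⁺(p,q) := 1 otherwise. Let ψ, φ : ℝ → ℂ satisfy ψ(p) = 0 for all p ≤ 0 and φ(p) = 0 for all p ≥ 0. Then for every n ∈ ℕ and all p₁, …, pₙ ∈ ℝ: ∑_{k=0}^{n} (k!·(n−k)!)⁻¹ · ∑_{π ∈ S_n} ( ∏_{1 ≤ i ≤ k < j ≤ n} R₀⁺(p_{π(i)}, p_{π(j)}) ) · ∏_{i=1}^{k} ψ(p_{π(i)}) · ∏_{j=k+1}^{n} φ(p_{π(j)}) = ( ∏_{i=1}^{n} ∏_{j=1}^{n} R₀⁺(p_i, p_j) ) · ∏_{i=1}^{n} ( ψ(p_i) + φ(p_i) ), where S_n denotes the symmetric group on n letters. -/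
/-!
Group the permutations by the image `S = π {0, …, k-1}`: each fibre has `k! (n-k)!` elements and
all its terms equal the weight of the splitting `S ⊔ Sᶜ`, so the left side is the sum of these
weights over all subsets `S`. The supports of `ψ` and `φ` kill every `S` other than the set of
positive momenta, and for that `S` every pair outside `S × Sᶜ` has `R₀⁺ = 1`; expanding
`∏ (ψ + φ)` over subsets then gives the right side.
-/
open Finset

namespace Equiv

variable {α : Type*} {p q : α → Prop} [DecidablePred p] [DecidablePred q]

theorem subtypeCongr_apply_of_pos (e : {x // p x} ≃ {x // q x}) (f : {x // ¬p x} ≃ {x // ¬q x})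
    {a : α} (h : p a) : e.subtypeCongr f a = e ⟨a, h⟩ := by
  simp [Equiv.subtypeCongr, sumCompl_symm_apply_of_pos h]

theorem subtypeCongr_apply_of_neg (e : {x // p x} ≃ {x // q x}) (f : {x // ¬p x} ≃ {x // ¬q x})
    {a : α} (h : ¬p a) : e.subtypeCongr f a = f ⟨a, h⟩ := by
  simp [Equiv.subtypeCongr, sumCompl_symm_apply_of_neg h]

variable (p q) in
def Perm.subtypeCongrEquiv :
    {σ : Perm α // ∀ x, p x ↔ q (σ x)} ≃
      ({x // p x} ≃ {x // q x}) × ({x // ¬p x} ≃ {x // ¬q x}) where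
  toFun σ := (σ.1.subtypeEquiv σ.2, σ.1.subtypeEquiv fun x => not_congr (σ.2 x))
  invFun ef := ⟨ef.1.subtypeCongr ef.2, fun x => by
    by_cases hx : p x
    · simp [subtypeCongr_apply_of_pos _ _ hx, hx, (ef.1 ⟨x, hx⟩).2]
    · simp [subtypeCongr_apply_of_neg _ _ hx, hx, (ef.2 ⟨x, hx⟩).2]⟩
  left_inv σ := by
    ext x
    by_cases hx : p x
    · simp [subtypeCongr_apply_of_pos _ _ hx]
    · simp [subtypeCongr_apply_of_neg _ _ hx]
  right_inv ef := by
    ext x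
    · simp [subtypeCongr_apply_of_pos _ _ x.2]
    · simp [subtypeCongr_apply_of_neg _ _ x.2]

theorem Perm.image_eq_iff_forall_mem [DecidableEq α] (σ : Perm α) (A S : Finset α) :
    A.image σ = S ↔ ∀ x, x ∈ A ↔ σ x ∈ S := by
  rw [Finset.ext_iff, σ.surjective.forall]
  simp only [σ.injective.mem_finset_image]

end Equiv

namespace Equiv.Perm

variable {α : Type*} [Fintype α] [DecidableEq α]

theorem card_filter_image_eq {A S : Finset α} (h : #S = #A) :
    #{σ : Perm α | A.image σ = S} = (#A).factorial * (Fintype.card α - #A).factorial := by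
  have hpos : Fintype.card {x // x ∈ A} = Fintype.card {x // x ∈ S} := by simp [h]
  have hneg : Fintype.card {x // x ∉ A} = Fintype.card {x // x ∉ S} := by
    simp [Fintype.card_subtype_compl, h]
  rw [← Fintype.card_subtype, Fintype.card_congr ((subtypeEquivRight fun σ =>
      σ.image_eq_iff_forall_mem A S).trans (subtypeCongrEquiv _ _)), Fintype.card_prod,
    Fintype.card_equiv (Fintype.equivOfCardEq hpos),
    Fintype.card_equiv (Fintype.equivOfCardEq hneg), Fintype.card_subtype_compl]
  simp

theorem sum_image_eq_smul_sum_powersetCard {M : Type*} [AddCommMonoid M] (F : Finset α → M)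
    (A : Finset α) :
    ∑ σ : Perm α, F (A.image σ) =
      ((#A).factorial * (Fintype.card α - #A).factorial) • ∑ S ∈ powersetCard #A univ, F S := by
  have hmaps : ∀ σ ∈ (univ : Finset (Perm α)), A.image σ ∈ powersetCard #A univ := fun σ _ => by
    simp [card_image_of_injective _ σ.injective]
  rw [← sum_fiberwise_of_maps_to hmaps, smul_sum]
  refine sum_congr rfl fun S hS => ?_
  rw [sum_congr rfl fun σ hσ => congrArg F (mem_filter.mp hσ).2, sum_const,
    card_filter_image_eq (mem_powersetCard_univ.mp hS)]

end Equiv.Perm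

section SplitWeight

open Equiv

variable {α R : Type*} [Fintype α] [DecidableEq α]

def splitWeight [CommMonoid R] (f : α → α → R) (g h : α → R) (S : Finset α) : R :=
  (∏ ab ∈ S ×ˢ Sᶜ, f ab.1 ab.2) * (∏ a ∈ S, g a) * ∏ b ∈ Sᶜ, h b

theorem splitWeight_image_perm [CommMonoid R] (f : α → α → R) (g h : α → R) (σ : Perm α)
    (A : Finset α) :
    splitWeight f g h (A.image σ) =
      (∏ ij ∈ A ×ˢ Aᶜ, f (σ ij.1) (σ ij.2)) * (∏ i ∈ A, g (σ i)) * ∏ j ∈ Aᶜ, h (σ j) := by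
  have hcompl : (A.image σ)ᶜ = Aᶜ.image σ := by
    rw [← Finset.coe_inj]
    push_cast
    exact (σ.image_compl _).symm
  simp [splitWeight, hcompl, prod_product, prod_image, σ.injective.injOn]

theorem splitWeight_eq_of_ne_one [CommMonoidWithZero R] {f : α → α → R} {g h : α → R}
    (hf : ∀ a b, f a b ≠ 1 → h a = 0 ∧ g b = 0) (S : Finset α) :
    splitWeight f g h S = (∏ a, ∏ b, f a b) * (∏ a ∈ S, g a) * ∏ b ∈ Sᶜ, h b := by
  by_cases hS : (∀ a ∈ S, g a ≠ 0) ∧ ∀ b ∈ Sᶜ, h b ≠ 0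
  · suffices ∏ ab ∈ S ×ˢ Sᶜ, f ab.1 ab.2 = ∏ a, ∏ b, f a b by rw [splitWeight, this]
    rw [← Fintype.prod_prod_type']
    refine prod_subset (subset_univ _) fun ab _ hab => ?_
    by_contra hne
    obtain ⟨hha, hgb⟩ := hf _ _ hne
    refine hab (mem_product.mpr ⟨?_, mem_compl.mpr fun hb => hS.1 _ hb hgb⟩)
    by_contra ha
    exact hS.2 _ (mem_compl.mpr ha) hha
  · simp only [not_and_or, not_forall, not_not] at hS
    rcases hS with ⟨a, ha, hga⟩ | ⟨b, hb, hhb⟩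
    · simp [splitWeight, prod_eq_zero ha hga]
    · simp [splitWeight, prod_eq_zero hb hhb]

theorem sum_splitWeight_of_ne_one [CommSemiring R] {f : α → α → R} {g h : α → R}
    (hf : ∀ a b, f a b ≠ 1 → h a = 0 ∧ g b = 0) :
    ∑ S, splitWeight f g h S = (∏ a, ∏ b, f a b) * ∏ a, (g a + h a) := by
  simp_rw [splitWeight_eq_of_ne_one hf, mul_assoc, ← mul_sum, prod_add, compl_eq_univ_sdiff,
    powerset_univ]

end SplitWeight

theorem sum_range_sum_perm_eq_sum_splitWeight {R : Type*} [Semifield R] [CharZero R] {n : ℕ}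
    (f : Fin n → Fin n → R) (g h : Fin n → R) :
    ∑ k ∈ Finset.range (n + 1), ((Nat.factorial k * Nat.factorial (n - k) : ℕ) : R)⁻¹ *
        ∑ π : Equiv.Perm (Fin n),
          (∏ ij ∈ univ.filter (fun ij : Fin n × Fin n => ij.1.val < k ∧ k ≤ ij.2.val),
            f (π ij.1) (π ij.2))
          * (∏ i ∈ univ.filter (fun i : Fin n => i.val < k), g (π i))
          * (∏ j ∈ univ.filter (fun j : Fin n => k ≤ j.val), h (π j))
      = ∑ S, splitWeight f g h S := by
  rw [← powerset_univ, sum_powerset, Finset.card_univ, Fintype.card_fin]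
  refine sum_congr rfl fun k hk => ?_
  set A : Finset (Fin n) := univ.filter (fun i : Fin n => i.val < k)
  have hA : #A = k := by
    simpa [A, Fin.card_filter_val_lt] using Nat.lt_succ_iff.mp (mem_range.mp hk)
  have hcompl : univ.filter (fun j : Fin n => k ≤ j.val) = Aᶜ := by ext; simp [A]
  have hprod : univ.filter (fun ij : Fin n × Fin n => ij.1.val < k ∧ k ≤ ij.2.val) = A ×ˢ Aᶜ := by
    ext; simp [A]
  simp_rw [hprod, hcompl, ← splitWeight_image_perm]
  rw [Equiv.Perm.sum_image_eq_smul_sum_powersetCard (splitWeight f g h) A, hA, Fintype.card_fin,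
    nsmul_eq_mul, ← mul_assoc, inv_mul_cancel₀ (Nat.cast_ne_zero.mpr (by positivity)), one_mul]

/-- The n-particle component computation expressing `Ŝ_R = V S_R V*` as a
multiplication operator, for wave functions built from `ψ` supported on
positive momenta and `φ` supported on negative momenta. -/
theorem chiral_S_matrix_multiplication_identity (R : ℝ → ℂ)
    (ψ φ : ℝ → ℂ)
    (hψ : ∀ p : ℝ, p ≤ 0 → ψ p = 0) (hφ : ∀ p : ℝ, 0 ≤ p → φ p = 0)
    (n : ℕ) (p : Fin n → ℝ) :
    ∑ k ∈ Finset.range (n + 1),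
        ((Nat.factorial k * Nat.factorial (n - k) : ℕ) : ℂ)⁻¹ *
          ∑ π : Equiv.Perm (Fin n),
            (∏ ij ∈ univ.filter
                (fun ij : Fin n × Fin n => ij.1.val < k ∧ k ≤ ij.2.val),
              (if 0 < p (π ij.1) ∧ p (π ij.2) < 0
                then R (-(p (π ij.1) * p (π ij.2))) else 1))
            * (∏ i ∈ univ.filter (fun i : Fin n => i.val < k), ψ (p (π i)))
            * (∏ j ∈ univ.filter (fun j : Fin n => k ≤ j.val), φ (p (π j)))
    = (∏ i : Fin n, ∏ j : Fin n,
        (if 0 < p i ∧ p j < 0 then R (-(p i * p j)) else 1))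
      * ∏ i : Fin n, (ψ (p i) + φ (p i)) := by
  refine (sum_range_sum_perm_eq_sum_splitWeight
    (fun i j => if 0 < p i ∧ p j < 0 then R (-(p i * p j)) else 1)
    (fun i => ψ (p i)) (fun i => φ (p i))).trans (sum_splitWeight_of_ne_one fun i j hij => ?_)
  have hpos_neg : 0 < p i ∧ p j < 0 := by
    by_contra h
    exact hij (if_neg h)
  exact ⟨hφ _ hpos_neg.1.le, hψ _ hpos_neg.2.le⟩
end

section
/- Let R : ℝ → ℂ satisfy conj(R(t)) = R(t)⁻¹ = R(−t) for all t ∈ ℝ. Define R₀⁺(p,q) := R(−pq) if p > 0 and q < 0, R₀⁺(p,q) := 1 otherwise; and define R₀(p,q) := R(−pq) if p > 0, q < 0, R₀(p,q) := R(pq) if p < 0, q > 0, and R₀(p,q) := 1 otherwise. Then for every n ∈ ℕ and p : Fin n → ℝ: (a) for every q > 0, ∏_{k} ( R₀⁺(q, p(k)) · R₀⁺(p(k), q) ) = ∏_{k} R₀(q, p(k)); and (b) for every q < 0, ∏_{k} conj( R₀⁺(q, p(k)) · R₀⁺(p(k), q) ) = ∏_{k} R₀(q, p(k)). -/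
open Finset ComplexConjugate

namespace MasslessDeformation

/-- The paper's `R₀⁺(p, q)`. -/
noncomputable def kernelPlus (R : ℝ → ℂ) (p q : ℝ) : ℂ :=
  if 0 < p ∧ q < 0 then R (-(p * q)) else 1

/-- The paper's `R₀(p, q)`. -/
noncomputable def kernel (R : ℝ → ℂ) (p q : ℝ) : ℂ :=
  if 0 < p ∧ q < 0 then R (-(p * q)) else if p < 0 ∧ 0 < q then R (p * q) else 1

variable {R : ℝ → ℂ} {p q : ℝ}

theorem kernelPlus_of_nonneg_right (hq : 0 ≤ q) : kernelPlus R p q = 1 :=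
  if_neg fun h => hq.not_gt h.2

theorem kernelPlus_of_nonpos_left (hp : p ≤ 0) : kernelPlus R p q = 1 :=
  if_neg fun h => hp.not_gt h.1

theorem kernel_of_pos (hp : 0 < p) : kernel R p q = kernelPlus R p q := by
  rw [kernel, kernelPlus, if_neg fun h : p < 0 ∧ 0 < q => hp.not_gt h.1]

theorem kernel_of_neg (hR : ∀ t, conj (R t) = R (-t)) (hp : p < 0) :
    kernel R p q = conj (kernelPlus R q p) := by
  have hpq : ¬(0 < p ∧ q < 0) := fun h => hp.not_gt h.1
  by_cases hq : 0 < q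
  · rw [kernel, kernelPlus, if_neg hpq, if_pos ⟨hp, hq⟩, if_pos ⟨hq, hp⟩, hR, neg_neg, mul_comm]
  · rw [kernel, kernelPlus, if_neg hpq, if_neg fun h => hq h.2, if_neg fun h => hq h.1, map_one]

end MasslessDeformation

open MasslessDeformation

/-- Pointwise kernel computations proving `a_R(ψ) = Ŝ_R* a(ψ) Ŝ_R` for ψ
supported in positive momenta and `a_R(ψ) = Ŝ_R a(ψ) Ŝ_R*` for ψ supported in
negative momenta. -/
theorem kernel_identities_positive_negative_momentum (R : ℝ → ℂ)
    (hR : ∀ t : ℝ, (starRingEnd ℂ) (R t) = (R t)⁻¹ ∧ (R t)⁻¹ = R (-t))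
    (n : ℕ) (p : Fin n → ℝ) :
    (∀ q : ℝ, 0 < q →
      ∏ k : Fin n,
          ((if 0 < q ∧ p k < 0 then R (-(q * p k)) else 1)
            * (if 0 < p k ∧ q < 0 then R (-(p k * q)) else 1))
        = ∏ k : Fin n,
            (if 0 < q ∧ p k < 0 then R (-(q * p k))
              else if q < 0 ∧ 0 < p k then R (q * p k) else 1)) ∧
    (∀ q : ℝ, q < 0 →
      ∏ k : Fin n,
          (starRingEnd ℂ)
            ((if 0 < q ∧ p k < 0 then R (-(q * p k)) else 1)
              * (if 0 < p k ∧ q < 0 then R (-(p k * q)) else 1))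
        = ∏ k : Fin n,
            (if 0 < q ∧ p k < 0 then R (-(q * p k))
              else if q < 0 ∧ 0 < p k then R (q * p k) else 1)) := by
  have hconj : ∀ t, conj (R t) = R (-t) := fun t => (hR t).1.trans (hR t).2
  refine ⟨fun q hq => prod_congr rfl fun k _ => ?_, fun q hq => prod_congr rfl fun k _ => ?_⟩
  · change kernelPlus R q (p k) * kernelPlus R (p k) q = kernel R q (p k)
    rw [kernelPlus_of_nonneg_right hq.le, mul_one, kernel_of_pos hq]
  · change conj (kernelPlus R q (p k) * kernelPlus R (p k) q) = kernel R q (p k)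
    rw [kernelPlus_of_nonpos_left hq.le, one_mul, kernel_of_neg hconj hq]
end
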